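/- arXiv:1109.3839 — 3 statements merged into one kernel-verified Lean document; each statement's English description precedes it below -/
import Mathlib

section
/- Let T be a positive integer, let e0 ≥ 0, e1 ≥ 0 and β ≥ 0 be real numbers with e0 + e1 > 0, and let L : ℕ → ℝ be a workload. Suppose the online solution (x, m) satisfies m 0 = 0, m t ≥ 0 for all t, x t = m t for all t, and Σ_{j=1}^{t} m j ≤ Σ_{j=1}^{t} L j for every t ∈ {1,…,T}; and suppose the offline solution (x*, m*) satisfies x* t ≤ m* t for every t ∈ {1,…,T}, m* 0 = 0, and Σ_{t=1}^{T} x* t = Σ_{t=1}^{T} L t. Then cost(X,M) ≤ ((e0 + e1 + 2β)/(e0 + e1)) · cost(X*,M*), where cost(Y,N) = Σ_{t=1}^{T} (e0 · n t + e1 · y t) + β Σ_{t=1}^{T} |n t − n (t−1)|. -/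
/-!
With `x = m`, the online operating cost is `(e0 + e1) S` for `S = Σ m t`, and since `m` starts
at `0` its switching cost is at most `2 S`. The release constraint at `T` gives
`S ≤ Σ L t = Σ x* t`, while the offline cost is at least `(e0 + e1) Σ x* t` because `x* ≤ m*`.
-/

open Finset

noncomputable def cost (e0 e1 β : ℝ) (T : ℕ) (x m : ℕ → ℝ) : ℝ :=
  ∑ t ∈ Icc 1 T, (e0 * m t + e1 * x t) + β * ∑ t ∈ Icc 1 T, |m t - m (t - 1)|

/-- Each level `m t` is paid for at most twice: once when switched on, once when switched off. -/
lemma sum_abs_sub_add_le (m : ℕ → ℝ) (hm : ∀ t, 0 ≤ m t) (T : ℕ) :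
    ∑ t ∈ Icc 1 T, |m t - m (t - 1)| + m T ≤ m 0 + 2 * ∑ t ∈ Icc 1 T, m t := by
  induction T with
  | zero => simp
  | succ n ih =>
    rw [sum_Icc_succ_top (by omega), sum_Icc_succ_top (by omega), Nat.add_sub_cancel]
    have hstep : |m (n + 1) - m n| ≤ m (n + 1) + m n :=
      (abs_sub _ _).trans_eq (by rw [abs_of_nonneg (hm _), abs_of_nonneg (hm _)])
    linarith

lemma cost_le_mul_sum_of_eq (e0 e1 β : ℝ) (hβ : 0 ≤ β) (T : ℕ) (x m : ℕ → ℝ)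
    (hm0 : m 0 = 0) (hm : ∀ t, 0 ≤ m t) (hx : ∀ t, x t = m t) :
    cost e0 e1 β T x m ≤ (e0 + e1 + 2 * β) * ∑ t ∈ Icc 1 T, m t := by
  have hswitch : ∑ t ∈ Icc 1 T, |m t - m (t - 1)| ≤ 2 * ∑ t ∈ Icc 1 T, m t := by
    linarith [sum_abs_sub_add_le m hm T, hm T]
  have hop : ∑ t ∈ Icc 1 T, (e0 * m t + e1 * x t) = (e0 + e1) * ∑ t ∈ Icc 1 T, m t := by
    rw [mul_sum]
    exact sum_congr rfl fun t _ => by rw [hx]; ring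
  rw [cost, hop]
  nlinarith [mul_le_mul_of_nonneg_left hswitch hβ]

lemma mul_sum_le_cost (e0 e1 β : ℝ) (he0 : 0 ≤ e0) (hβ : 0 ≤ β) (T : ℕ) (x m : ℕ → ℝ)
    (hxm : ∀ t ∈ Icc 1 T, x t ≤ m t) :
    (e0 + e1) * ∑ t ∈ Icc 1 T, x t ≤ cost e0 e1 β T x m := by
  have hop : ∑ t ∈ Icc 1 T, (e0 * m t + e1 * x t)
      = e0 * ∑ t ∈ Icc 1 T, m t + e1 * ∑ t ∈ Icc 1 T, x t := by
    rw [mul_sum, mul_sum, ← sum_add_distrib]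
  have hswitch : 0 ≤ β * ∑ t ∈ Icc 1 T, |m t - m (t - 1)| :=
    mul_nonneg hβ (sum_nonneg fun _ _ => abs_nonneg _)
  rw [cost, hop]
  nlinarith [mul_le_mul_of_nonneg_left (sum_le_sum hxm) he0]

theorem vfw_competitive_ratio_general (T : ℕ) (hT : 0 < T)
    (e0 e1 β : ℝ) (he0 : 0 ≤ e0) (hβ : 0 ≤ β)
    (hpos : 0 < e0 + e1)
    (L : ℕ → ℝ)
    -- online solution (x, m)
    (x m : ℕ → ℝ) (hm0 : m 0 = 0) (hm : ∀ t, 0 ≤ m t)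
    (hx : ∀ t, x t = m t)
    (hrel : ∀ t ∈ Finset.Icc 1 T,
      ∑ j ∈ Finset.Icc 1 t, m j ≤ ∑ j ∈ Finset.Icc 1 t, L j)
    -- offline solution (x*, m*)
    (xs ms : ℕ → ℝ)
    (hxm : ∀ t ∈ Finset.Icc 1 T, xs t ≤ ms t)
    (hsum : ∑ t ∈ Finset.Icc 1 T, xs t = ∑ t ∈ Finset.Icc 1 T, L t) :
    ∑ t ∈ Finset.Icc 1 T, (e0 * m t + e1 * x t)
      + β * ∑ t ∈ Finset.Icc 1 T, |m t - m (t - 1)|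
      ≤ ((e0 + e1 + 2 * β) / (e0 + e1)) *
        (∑ t ∈ Finset.Icc 1 T, (e0 * ms t + e1 * xs t)
          + β * ∑ t ∈ Finset.Icc 1 T, |ms t - ms (t - 1)|) := by
  change cost e0 e1 β T x m ≤ _ * cost e0 e1 β T xs ms
  have hreleased : ∑ t ∈ Icc 1 T, m t ≤ ∑ t ∈ Icc 1 T, xs t :=
    hsum ▸ hrel T (right_mem_Icc.mpr hT)
  calc cost e0 e1 β T x m
      ≤ (e0 + e1 + 2 * β) * ∑ t ∈ Icc 1 T, m t := cost_le_mul_sum_of_eq e0 e1 β hβ T x m hm0 hm hx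
    _ = (e0 + e1 + 2 * β) / (e0 + e1) * ((e0 + e1) * ∑ t ∈ Icc 1 T, m t) := by
      field_simp
    _ ≤ (e0 + e1 + 2 * β) / (e0 + e1) * ((e0 + e1) * ∑ t ∈ Icc 1 T, xs t) := by
      gcongr
    _ ≤ (e0 + e1 + 2 * β) / (e0 + e1) * cost e0 e1 β T xs ms := by
      gcongr
      exact mul_sum_le_cost e0 e1 β he0 hβ T xs ms hxm

/-- Competitive-ratio bound (Theorem 2 of the paper):
`cost(X,M) ≤ ((e0 + e1 + 2β)/(e0 + e1)) · cost(X*,M*)`. -/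
theorem vfw_competitive_ratio (T : ℕ) (hT : 0 < T)
    (e0 e1 β : ℝ) (he0 : 0 ≤ e0) (he1 : 0 ≤ e1) (hβ : 0 ≤ β)
    (hpos : 0 < e0 + e1)
    (L : ℕ → ℝ) (hL : ∀ t, 0 ≤ L t)
    -- online solution (x, m)
    (x m : ℕ → ℝ) (hm0 : m 0 = 0) (hm : ∀ t, 0 ≤ m t)
    (hx : ∀ t, x t = m t)
    (hrel : ∀ t ∈ Finset.Icc 1 T,
      ∑ j ∈ Finset.Icc 1 t, m j ≤ ∑ j ∈ Finset.Icc 1 t, L j)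
    -- offline solution (x*, m*)
    (xs ms : ℕ → ℝ) (hms0 : ms 0 = 0)
    (hxm : ∀ t ∈ Finset.Icc 1 T, xs t ≤ ms t)
    (hsum : ∑ t ∈ Finset.Icc 1 T, xs t = ∑ t ∈ Finset.Icc 1 T, L t) :
    ∑ t ∈ Finset.Icc 1 T, (e0 * m t + e1 * x t)
      + β * ∑ t ∈ Finset.Icc 1 T, |m t - m (t - 1)|
      ≤ ((e0 + e1 + 2 * β) / (e0 + e1)) *
        (∑ t ∈ Finset.Icc 1 T, (e0 * ms t + e1 * xs t)
          + β * ∑ t ∈ Finset.Icc 1 T, |ms t - ms (t - 1)|) :=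
  vfw_competitive_ratio_general T hT e0 e1 β he0 hβ hpos L x m hm0 hm hx hrel xs ms hxm hsum
end

section
/- Let L : ℕ → ℝ be a workload with L t ≤ M for all t, where M ≥ 0 is the total number of servers, and let δ, D be natural numbers with 0 < δ < D. Define l^d t = L (t − d) if t > d and 0 otherwise. Fix t ≥ 0 and suppose S ∈ ℝ satisfies Σ_{j=1}^{t} l^D j ≤ S ≤ Σ_{j=1}^{t} l^δ j. Then there exists a real number m with 0 ≤ m ≤ M such that Σ_{j=1}^{t+1} l^D j ≤ S + m ≤ Σ_{j=1}^{t+1} l^δ j. Consequently, by induction starting from S = 0 at t = 0, the online algorithm VFW(δ) always has a feasible choice of capacity at every time slot. -/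
/-- The cumulative delayed workload equals a shifted cumulative workload. -/
lemma vfw_sum_shift (L : ℕ → ℝ) (l : ℕ → ℕ → ℝ)
    (hl : ∀ d t, l d t = if d < t then L (t - d) else 0) (d : ℕ) :
    ∀ n, ∑ j ∈ Finset.Icc 1 n, l d j = ∑ i ∈ Finset.Icc 1 (n - d), L i := by
  intro n
  induction n with
  | zero => simp
  | succ n ih =>
    rw [Finset.sum_Icc_succ_top (by omega : 1 ≤ n + 1), ih, hl]
    by_cases h : d < n + 1
    · rw [if_pos h]
      have h1 : n + 1 - d = (n - d) + 1 := by omega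
      rw [h1, Finset.sum_Icc_succ_top (by omega : 1 ≤ n - d + 1)]
    · rw [if_neg h]
      have h1 : n + 1 - d = n - d := by omega
      rw [h1, add_zero]

/-- Feasibility of VFW(δ) (Theorem 1 of the paper): the invariant
`Σ_{j=1}^{t} l^D j ≤ S ≤ Σ_{j=1}^{t} l^δ j` can always be maintained by some
capacity `m ∈ [0, M]` at the next time slot. -/
theorem vfw_feasible_step (L : ℕ → ℝ) (hL : ∀ t, 0 ≤ L t)
    (M : ℝ) (hM : 0 ≤ M) (hLM : ∀ t, L t ≤ M)
    (δ D : ℕ) (hδ : 0 < δ) (hδD : δ < D)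
    (l : ℕ → ℕ → ℝ)
    (hl : ∀ d t, l d t = if d < t then L (t - d) else 0)
    (t : ℕ) (S : ℝ)
    (h1 : ∑ j ∈ Finset.Icc 1 t, l D j ≤ S)
    (h2 : S ≤ ∑ j ∈ Finset.Icc 1 t, l δ j) :
    ∃ m : ℝ, 0 ≤ m ∧ m ≤ M ∧
      ∑ j ∈ Finset.Icc 1 (t + 1), l D j ≤ S + m ∧
      S + m ≤ ∑ j ∈ Finset.Icc 1 (t + 1), l δ j := by
  have hnn : ∀ d j, 0 ≤ l d j := by
    intro d j; rw [hl]; split <;> simp [hL]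
  have hle : ∀ d j, l d j ≤ M := by
    intro d j; rw [hl]; split <;> [exact hLM _; exact hM]
  have hAB : ∀ n, ∑ j ∈ Finset.Icc 1 n, l D j ≤ ∑ j ∈ Finset.Icc 1 n, l δ j := by
    intro n
    rw [vfw_sum_shift L l hl, vfw_sum_shift L l hl]
    apply Finset.sum_le_sum_of_subset_of_nonneg
    · exact Finset.Icc_subset_Icc le_rfl (by omega)
    · intro i _ _; exact hL i
  set A' := ∑ j ∈ Finset.Icc 1 (t + 1), l D j with hA'
  set B' := ∑ j ∈ Finset.Icc 1 (t + 1), l δ j with hB'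
  refine ⟨max 0 (A' - S), le_max_left _ _, ?_, ?_, ?_⟩
  · apply max_le hM
    have := h1
    have hsplit : A' = (∑ j ∈ Finset.Icc 1 t, l D j) + l D (t + 1) := by
      rw [hA', Finset.sum_Icc_succ_top (by omega : 1 ≤ t + 1)]
    have := hle D (t + 1)
    linarith
  · have : A' - S ≤ max 0 (A' - S) := le_max_right _ _
    linarith
  · rcases max_choice 0 (A' - S) with h | h
    · rw [h, add_zero]
      have hsplit : B' = (∑ j ∈ Finset.Icc 1 t, l δ j) + l δ (t + 1) := by
        rw [hB', Finset.sum_Icc_succ_top (by omega : 1 ≤ t + 1)]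
      have := hnn δ (t + 1)
      linarith
    · rw [h]
      have := hAB (t + 1)
      linarith
end

section
/- Let D, θ be natural numbers with θ < D, and let a, b : ℕ → ℝ be nonnegative with a d = 0 for all d > D − θ and b d = 0 for all d < θ and all d > D. Then there exist a natural number δ with δ ≤ D − θ and nonnegative functions a', b' : ℕ → ℝ such that: (i) a' d + b' (d + θ) = a d + b (d + θ) for every d ∈ {0,…,D − θ} (the total amount executed from each release slot is preserved); (ii) Σ_{d=0}^{D} a' d = Σ_{d=0}^{D} a d and Σ_{d=0}^{D} b' d = Σ_{d=0}^{D} b d (the total amounts executed at each of the two execution times are preserved); (iii) a' d = 0 for all d < δ and b' d = 0 for all d > θ + δ (the earlier execution time serves only the older releases and the later execution time serves only the newer releases, i.e., the assignment follows earliest-deadline-first). -/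
/-!
Put `c d = a d + b (d + θ)`, the total executed from the release indexed by `d`, and let
`S = ∑ a` be the load of the earlier slot. Pour `S` into the capacities `c d` greedily from the
oldest release (largest `d`) downwards: with tail sums `T k = ∑_{k ≤ i ≤ D - θ} c i`, the earlier
slot takes `min S (T d) - min S (T (d + 1))` from release `d` and the later slot takes the rest.
Both shares are decrements of antitone sequences, hence nonnegative, and both sums telescope.
The switching index `δ` is where `T` crosses `S`.
-/

open Finset

section SumReindex

variable {M : Type*} [AddCommMonoid M]

lemma sum_Icc_zero_eq_sum_range_of_eq_zero {f : ℕ → M} {m D : ℕ} (hmD : m ≤ D)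
    (hf : ∀ d, m < d → f d = 0) : ∑ d ∈ Icc 0 D, f d = ∑ d ∈ range (m + 1), f d := by
  rw [← Nat.range_succ_eq_Icc_zero]
  refine (sum_subset (range_subset_range.mpr (by omega)) fun d _ hd => hf d ?_).symm
  simpa using hd

lemma sum_Icc_zero_eq_sum_range_shift {f : ℕ → M} {θ D : ℕ} (hθD : θ ≤ D)
    (hf : ∀ d, d < θ → f d = 0) :
    ∑ d ∈ Icc 0 D, f d = ∑ d ∈ range (D - θ + 1), f (d + θ) := by
  rw [← Nat.range_succ_eq_Icc_zero, show D + 1 = θ + (D - θ + 1) by omega, sum_range_add,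
    sum_eq_zero fun d hd => hf d (mem_range.mp hd), zero_add]
  simp only [add_comm θ]

end SumReindex

lemma exists_le_apply_and_apply_succ_le {α : Type*} [LinearOrder α] {T : ℕ → α} {S : α} {m : ℕ}
    (h₀ : S ≤ T 0) (hm : T (m + 1) ≤ S) : ∃ δ ≤ m, S ≤ T δ ∧ T (δ + 1) ≤ S := by
  classical
  have hex : ∃ k, T (k + 1) ≤ S := ⟨m, hm⟩
  refine ⟨Nat.find hex, Nat.find_min' hex hm, ?_, Nat.find_spec hex⟩
  rcases h : Nat.find hex with _ | k
  · exact h₀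
  · exact (not_le.mp (Nat.find_min hex (h ▸ k.lt_succ_self))).le

section GreedyFill

variable (c : ℕ → ℝ) (n : ℕ) (S : ℝ)

def tailSum (k : ℕ) : ℝ := ∑ i ∈ Ico k n, c i

/-- The share of release `d` when the amount `S` is poured into the capacities `c 0, …, c (n-1)`
from the top index down: `min S (tailSum c n d)` is the part of `S` landing on indices `≥ d`. -/
def fillFromTop (d : ℕ) : ℝ := min S (tailSum c n d) - min S (tailSum c n (d + 1))

def fillRemainder (d : ℕ) : ℝ :=
  (tailSum c n d - min S (tailSum c n d)) - (tailSum c n (d + 1) - min S (tailSum c n (d + 1)))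

variable {c n S}

lemma tailSum_antitone (hc : ∀ d, 0 ≤ c d) : Antitone (tailSum c n) := fun _ _ hij =>
  sum_le_sum_of_subset_of_nonneg (Ico_subset_Ico_left hij) fun i _ _ => hc i

lemma tailSum_zero : tailSum c n 0 = ∑ d ∈ range n, c d := by
  rw [tailSum, range_eq_Ico]

lemma tailSum_of_le {k : ℕ} (h : n ≤ k) : tailSum c n k = 0 := by
  rw [tailSum, Ico_eq_empty_of_le h, sum_empty]

lemma tailSum_sub_tailSum_succ {k : ℕ} (hk : k < n) : tailSum c n k - tailSum c n (k + 1) = c k := by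
  rw [tailSum, sum_eq_sum_Ico_succ_bot hk, tailSum, add_sub_cancel_right]

lemma fillFromTop_nonneg (hc : ∀ d, 0 ≤ c d) (d : ℕ) : 0 ≤ fillFromTop c n S d :=
  sub_nonneg.mpr (min_le_min_left S (tailSum_antitone hc d.le_succ))

lemma fillRemainder_nonneg (hc : ∀ d, 0 ≤ c d) (d : ℕ) : 0 ≤ fillRemainder c n S d := by
  have h := tailSum_antitone (n := n) hc d.le_succ
  rw [fillRemainder, sub_nonneg]
  rcases le_total S (tailSum c n (d + 1)) with h₁ | h₁ <;>
  rcases le_total S (tailSum c n d) with h₂ | h₂ <;>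
  simp only [min_eq_left, min_eq_right, h₁, h₂] <;> linarith

lemma fillFromTop_add_fillRemainder {d : ℕ} (hd : d < n) :
    fillFromTop c n S d + fillRemainder c n S d = c d := by
  rw [fillFromTop, fillRemainder, ← tailSum_sub_tailSum_succ (c := c) hd]
  ring

lemma fillFromTop_of_le {d : ℕ} (hd : n ≤ d) : fillFromTop c n S d = 0 := by
  rw [fillFromTop, tailSum_of_le hd, tailSum_of_le (hd.trans d.le_succ), sub_self]

lemma fillFromTop_eq_zero (hc : ∀ d, 0 ≤ c d) {d : ℕ} (h : S ≤ tailSum c n (d + 1)) :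
    fillFromTop c n S d = 0 := by
  rw [fillFromTop, min_eq_left h, min_eq_left (h.trans (tailSum_antitone hc d.le_succ)), sub_self]

lemma fillRemainder_eq_zero (hc : ∀ d, 0 ≤ c d) {d : ℕ} (h : tailSum c n d ≤ S) :
    fillRemainder c n S d = 0 := by
  rw [fillRemainder, min_eq_right h, min_eq_right ((tailSum_antitone hc d.le_succ).trans h)]
  ring

lemma sum_fillFromTop (hS₀ : 0 ≤ S) (hS : S ≤ ∑ d ∈ range n, c d) :
    ∑ d ∈ range n, fillFromTop c n S d = S := by
  refine (sum_range_sub' (fun k => min S (tailSum c n k)) n).trans ?_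
  rw [tailSum_of_le le_rfl, tailSum_zero, min_eq_left hS, min_eq_right hS₀, sub_zero]

lemma sum_fillRemainder (hS₀ : 0 ≤ S) (hS : S ≤ ∑ d ∈ range n, c d) :
    ∑ d ∈ range n, fillRemainder c n S d = ∑ d ∈ range n, c d - S := by
  refine (sum_range_sub' (fun k => tailSum c n k - min S (tailSum c n k)) n).trans ?_
  rw [tailSum_of_le le_rfl, tailSum_zero, min_eq_left hS, min_eq_right hS₀]
  ring

end GreedyFill

theorem edf_exchange_general (D θ : ℕ) (hθ : θ < D)
    (a b : ℕ → ℝ) (ha : ∀ d, 0 ≤ a d) (hb : ∀ d, 0 ≤ b d)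
    (haD : ∀ d, D - θ < d → a d = 0)
    (hbθ : ∀ d, d < θ → b d = 0) :
    ∃ (δ : ℕ) (a' b' : ℕ → ℝ),
      δ ≤ D - θ ∧
      (∀ d, 0 ≤ a' d) ∧ (∀ d, 0 ≤ b' d) ∧
      (∀ d ∈ Finset.Icc 0 (D - θ), a' d + b' (d + θ) = a d + b (d + θ)) ∧
      (∑ d ∈ Finset.Icc 0 D, a' d = ∑ d ∈ Finset.Icc 0 D, a d) ∧
      (∑ d ∈ Finset.Icc 0 D, b' d = ∑ d ∈ Finset.Icc 0 D, b d) ∧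
      (∀ d, d < δ → a' d = 0) ∧
      (∀ d, θ + δ < d → b' d = 0) := by
  set n := D - θ + 1
  set c : ℕ → ℝ := fun d => a d + b (d + θ)
  set S := ∑ d ∈ range n, a d
  have hc : ∀ d, 0 ≤ c d := fun d => add_nonneg (ha d) (hb _)
  have hS₀ : 0 ≤ S := sum_nonneg fun d _ => ha d
  have hS : S ≤ ∑ d ∈ range n, c d := sum_le_sum fun d _ => le_add_of_nonneg_right (hb _)
  obtain ⟨δ, hδ, hSδ, hδS⟩ := exists_le_apply_and_apply_succ_le (tailSum_zero (c := c) ▸ hS)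
    (tailSum_of_le (c := c) le_rfl ▸ hS₀)
  have hT := tailSum_antitone (n := n) hc
  set b' : ℕ → ℝ := fun e => if θ ≤ e then fillRemainder c n S (e - θ) else 0
  have hb'θ : ∀ e, e < θ → b' e = 0 := fun e he => if_neg (not_le.mpr he)
  have hb'shift : ∀ d, b' (d + θ) = fillRemainder c n S d := fun d => by simp [b']
  refine ⟨δ, fillFromTop c n S, b', hδ, fillFromTop_nonneg hc, fun e => ?_, fun d hd => ?_,
    ?_, ?_, fun d hd => fillFromTop_eq_zero hc (hSδ.trans (hT hd)), fun e he => ?_⟩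
  · by_cases he : θ ≤ e <;> simp [b', he, fillRemainder_nonneg hc]
  · rw [hb'shift, fillFromTop_add_fillRemainder (by simp at hd; omega)]
  · rw [sum_Icc_zero_eq_sum_range_of_eq_zero (by omega) fun d hd => fillFromTop_of_le hd,
      sum_Icc_zero_eq_sum_range_of_eq_zero (by omega) haD, sum_fillFromTop hS₀ hS]
  · rw [sum_Icc_zero_eq_sum_range_shift hθ.le hb'θ, sum_Icc_zero_eq_sum_range_shift hθ.le hbθ]
    simp only [hb'shift]
    rw [sum_fillRemainder hS₀ hS, sum_add_distrib, add_sub_cancel_left]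
  · have hθe : θ ≤ e := by omega
    simp only [b', if_pos hθe]
    exact fillRemainder_eq_zero hc ((hT (by omega : δ + 1 ≤ e - θ)).trans hδS)

/-- Exchange lemma (Lemma 1 of the paper): any assignment of releases to the two
execution slots can be reshuffled into an earliest-deadline-first assignment
preserving the per-release totals and the per-execution-slot totals. -/
theorem edf_exchange (D θ : ℕ) (hθ : θ < D)
    (a b : ℕ → ℝ) (ha : ∀ d, 0 ≤ a d) (hb : ∀ d, 0 ≤ b d)
    (haD : ∀ d, D - θ < d → a d = 0)
    (hbθ : ∀ d, d < θ → b d = 0)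
    (hbD : ∀ d, D < d → b d = 0) :
    ∃ (δ : ℕ) (a' b' : ℕ → ℝ),
      δ ≤ D - θ ∧
      (∀ d, 0 ≤ a' d) ∧ (∀ d, 0 ≤ b' d) ∧
      (∀ d ∈ Finset.Icc 0 (D - θ), a' d + b' (d + θ) = a d + b (d + θ)) ∧
      (∑ d ∈ Finset.Icc 0 D, a' d = ∑ d ∈ Finset.Icc 0 D, a d) ∧
      (∑ d ∈ Finset.Icc 0 D, b' d = ∑ d ∈ Finset.Icc 0 D, b d) ∧
      (∀ d, d < δ → a' d = 0) ∧
      (∀ d, θ + δ < d → b' d = 0) :=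
  edf_exchange_general D θ hθ a b ha hb haD hbθ
end
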